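/- (Optimal risk-constrained throughput.) Let (Ω, μ) be a probability space, let C : Ω → ℝ and R_ach : Ω → ℝ be measurable random variables with C ≥ 0 almost surely and 0 ≤ R_ach ≤ 1 almost surely, let a > 0, and let ε_cov, ε_rel ∈ (0,1). Define q_max = min{1, a·Q_C^<(ε_cov)} and R_max = Q_{R_ach}^<(ε_rel). Then q_max·R_max is the greatest element of the set { q·R : 0 ≤ q ≤ 1, 0 ≤ R ≤ 1, P[q > a·C] ≤ ε_cov, P[R > R_ach] ≤ ε_rel }; that is, the pair (q_max, R_max) is feasible and every feasible pair (q, R) satisfies q·R ≤ q_max·R_max. -/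

import Mathlib

/-!
Both constraints are monotone: `P[q > a·C] = P[a·C < q]` and `P[R > R_ach] = P[R_ach < R]` are
nondecreasing in the threshold, and since `x ↦ P[X < x]` is left-continuous the supremum defining
`Q_X^<(ε)` is itself admissible. So a threshold is feasible exactly when it lies below the
quantile, and with `a·Q_C^<(ε) = Q_{a·C}^<(ε)` the feasible pairs form the rectangle
`[0, min 1 (a·Q_C^<)] × [0, Q_{R_ach}^<]`, on which the product `q·R` is largest at the top corner.
-/

open MeasureTheory

/-- The strict-outage quantile `Q_X^<(ε) = sup {x : P[X < x] ≤ ε}`. -/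
noncomputable def strictOutageQuantile {Ω : Type*} [MeasurableSpace Ω]
    (μ : Measure Ω) (X : Ω → ℝ) (ε : ℝ) : ℝ :=
  sSup {x : ℝ | (μ {ω | X ω < x}).toReal ≤ ε}

open Filter Topology Pointwise

section StrictOutageQuantile

variable {Ω : Type*} [MeasurableSpace Ω] {μ : Measure Ω} {X : Ω → ℝ} {ε x : ℝ}

theorem toReal_measure_lt_le_of_forall_lt [IsFiniteMeasure μ]
    (h : ∀ y < x, (μ {ω | X ω < y}).toReal ≤ ε) : (μ {ω | X ω < x}).toReal ≤ ε := by
  obtain ⟨u, hu_mono, hu_lt, hu_lim⟩ := exists_seq_strictMono_tendsto x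
  have hunion : ⋃ n, {ω | X ω < u n} = {ω | X ω < x} := by
    ext ω
    simp only [Set.mem_iUnion, Set.mem_ofPred_eq]
    exact ⟨fun ⟨n, hn⟩ => hn.trans (hu_lt n),
      fun hx => (hu_lim.eventually (eventually_gt_nhds hx)).exists⟩
  have hlim := tendsto_measure_iUnion_atTop (μ := μ) (s := fun n => {ω | X ω < u n})
    (fun m n hmn ω (hω : X ω < u m) => hω.trans_le (hu_mono.monotone hmn))
  rw [hunion] at hlim
  exact le_of_tendsto' ((ENNReal.tendsto_toReal (measure_ne_top μ _)).comp hlim)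
    fun n => h _ (hu_lt n)

theorem bddAbove_setOf_toReal_measure_lt_le [IsProbabilityMeasure μ] (hε : ε < 1) :
    BddAbove {x : ℝ | (μ {ω | X ω < x}).toReal ≤ ε} := by
  have hlim := tendsto_measure_iUnion_atTop (μ := μ) (s := fun y : ℝ => {ω | X ω < y})
    (fun y z hyz ω (hω : X ω < y) => hω.trans_le hyz)
  have hunion : ⋃ y : ℝ, {ω | X ω < y} = Set.univ :=
    Set.iUnion_eq_univ_iff.2 fun ω => exists_gt (X ω)
  rw [hunion, measure_univ] at hlim
  obtain ⟨b, hb⟩ := (((ENNReal.tendsto_toReal ENNReal.one_ne_top).comp hlim).eventually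
    (eventually_gt_nhds (by simpa using hε))).exists
  refine ⟨b, fun x hx => not_lt.1 fun hbx => (hb.trans_le ?_).not_ge hx⟩
  exact ENNReal.toReal_mono (measure_ne_top μ _)
    (measure_mono fun ω (hω : X ω < b) => hω.trans hbx)

theorem le_strictOutageQuantile [IsProbabilityMeasure μ] (hε : ε < 1)
    (hx : (μ {ω | X ω < x}).toReal ≤ ε) : x ≤ strictOutageQuantile μ X ε :=
  le_csSup (bddAbove_setOf_toReal_measure_lt_le hε) hx

theorem toReal_measure_lt_le_of_le_strictOutageQuantile [IsFiniteMeasure μ] {x₀ : ℝ}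
    (hx₀ : (μ {ω | X ω < x₀}).toReal ≤ ε) (hx : x ≤ strictOutageQuantile μ X ε) :
    (μ {ω | X ω < x}).toReal ≤ ε := by
  refine toReal_measure_lt_le_of_forall_lt fun y hy => ?_
  obtain ⟨z, hz, hyz⟩ := exists_lt_of_lt_csSup ⟨x₀, hx₀⟩ (hy.trans_le hx)
  exact (ENNReal.toReal_mono (measure_ne_top μ _)
    (measure_mono fun ω (hω : X ω < y) => hω.trans hyz)).trans hz

theorem toReal_measure_lt_zero_le (hX : ∀ᵐ ω ∂μ, 0 ≤ X ω) (hε : 0 ≤ ε) :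
    (μ {ω | X ω < 0}).toReal ≤ ε := by
  have hnull : μ {ω | X ω < 0} = 0 := by simpa only [ae_iff, not_le] using hX
  simpa [hnull] using hε

theorem strictOutageQuantile_nonneg [IsProbabilityMeasure μ] (hX : ∀ᵐ ω ∂μ, 0 ≤ X ω)
    (hε₀ : 0 ≤ ε) (hε₁ : ε < 1) : 0 ≤ strictOutageQuantile μ X ε :=
  le_strictOutageQuantile hε₁ (toReal_measure_lt_zero_le hX hε₀)

theorem strictOutageQuantile_le_of_ae_le [IsProbabilityMeasure μ] {b x₀ : ℝ}
    (hX : ∀ᵐ ω ∂μ, X ω ≤ b) (hε : ε < 1) (hx₀ : (μ {ω | X ω < x₀}).toReal ≤ ε) :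
    strictOutageQuantile μ X ε ≤ b := by
  by_contra! hb
  have hfull : μ {ω | X ω < strictOutageQuantile μ X ε} = 1 := by
    rw [measure_congr (eventuallyEq_univ.2 (hX.mono fun ω h => h.trans_lt hb)), measure_univ]
  have := toReal_measure_lt_le_of_le_strictOutageQuantile hx₀ le_rfl
  rw [hfull, ENNReal.toReal_one] at this
  linarith

theorem strictOutageQuantile_const_mul {a : ℝ} (ha : 0 < a) :
    strictOutageQuantile μ (fun ω => a * X ω) ε = a * strictOutageQuantile μ X ε := by
  have hset : {x : ℝ | (μ {ω | a * X ω < x}).toReal ≤ ε} =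
      a • {x : ℝ | (μ {ω | X ω < x}).toReal ≤ ε} := by
    ext x
    simp only [Set.mem_smul_set_iff_inv_smul_mem₀ ha.ne', Set.mem_ofPred_eq, smul_eq_mul,
      lt_inv_mul_iff₀ ha, mul_comm a]
  rw [strictOutageQuantile, strictOutageQuantile, hset, Real.sSup_smul_of_nonneg ha.le,
    smul_eq_mul]

end StrictOutageQuantile

theorem optimal_risk_constrained_throughput_general {Ω : Type*} [MeasurableSpace Ω]
    (μ : Measure Ω) [IsProbabilityMeasure μ]
    (C Rach : Ω → ℝ)
    (hC0 : ∀ᵐ ω ∂μ, 0 ≤ C ω)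
    (hRach0 : ∀ᵐ ω ∂μ, 0 ≤ Rach ω) (hRach1 : ∀ᵐ ω ∂μ, Rach ω ≤ 1)
    (a : ℝ) (ha : 0 < a)
    (εcov εrel : ℝ) (hεcov : εcov ∈ Set.Ioo (0 : ℝ) 1) (hεrel : εrel ∈ Set.Ioo (0 : ℝ) 1) :
    IsGreatest
      { t : ℝ | ∃ q R : ℝ, 0 ≤ q ∧ q ≤ 1 ∧ 0 ≤ R ∧ R ≤ 1 ∧
          (μ {ω | q > a * C ω}).toReal ≤ εcov ∧
          (μ {ω | R > Rach ω}).toReal ≤ εrel ∧ t = q * R }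
      (min 1 (a * strictOutageQuantile μ C εcov) * strictOutageQuantile μ Rach εrel) := by
  obtain ⟨hεcov₀, hεcov₁⟩ := hεcov
  obtain ⟨hεrel₀, hεrel₁⟩ := hεrel
  rw [← strictOutageQuantile_const_mul ha]
  have haC0 : ∀ᵐ ω ∂μ, 0 ≤ a * C ω := hC0.mono fun ω h => mul_nonneg ha.le h
  have hqmax0 := le_min zero_le_one (strictOutageQuantile_nonneg haC0 hεcov₀.le hεcov₁)
  constructor
  · exact ⟨_, _, hqmax0, min_le_left _ _,
      strictOutageQuantile_nonneg hRach0 hεrel₀.le hεrel₁,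
      strictOutageQuantile_le_of_ae_le hRach1 hεrel₁ (toReal_measure_lt_zero_le hRach0 hεrel₀.le),
      toReal_measure_lt_le_of_le_strictOutageQuantile
        (toReal_measure_lt_zero_le haC0 hεcov₀.le) (min_le_right _ _),
      toReal_measure_lt_le_of_le_strictOutageQuantile
        (toReal_measure_lt_zero_le hRach0 hεrel₀.le) le_rfl, rfl⟩
  · rintro _ ⟨q, R, -, hq1, hR0, -, hqcov, hRrel, rfl⟩
    exact mul_le_mul (le_min hq1 (le_strictOutageQuantile hεcov₁ hqcov))
      (le_strictOutageQuantile hεrel₁ hRrel) hR0 hqmax0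

/-- Optimal risk-constrained throughput: with
`q_max = min {1, a·Q_C^<(ε_cov)}` and `R_max = Q_{R_ach}^<(ε_rel)`, the value
`q_max · R_max` is the greatest element of the set of feasible throughputs
`{ q·R : 0 ≤ q ≤ 1, 0 ≤ R ≤ 1, P[q > a·C] ≤ ε_cov, P[R > R_ach] ≤ ε_rel }`. -/
theorem optimal_risk_constrained_throughput {Ω : Type*} [MeasurableSpace Ω]
    (μ : Measure Ω) [IsProbabilityMeasure μ]
    (C Rach : Ω → ℝ) (hC : Measurable C) (hRach : Measurable Rach)
    (hC0 : ∀ᵐ ω ∂μ, 0 ≤ C ω)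
    (hRach0 : ∀ᵐ ω ∂μ, 0 ≤ Rach ω) (hRach1 : ∀ᵐ ω ∂μ, Rach ω ≤ 1)
    (a : ℝ) (ha : 0 < a)
    (εcov εrel : ℝ) (hεcov : εcov ∈ Set.Ioo (0 : ℝ) 1) (hεrel : εrel ∈ Set.Ioo (0 : ℝ) 1) :
    IsGreatest
      { t : ℝ | ∃ q R : ℝ, 0 ≤ q ∧ q ≤ 1 ∧ 0 ≤ R ∧ R ≤ 1 ∧
          (μ {ω | q > a * C ω}).toReal ≤ εcov ∧
          (μ {ω | R > Rach ω}).toReal ≤ εrel ∧ t = q * R }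
      (min 1 (a * strictOutageQuantile μ C εcov) * strictOutageQuantile μ Rach εrel) :=
  optimal_risk_constrained_throughput_general μ C Rach hC0 hRach0 hRach1 a ha εcov εrel hεcov hεrel
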